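/- arXiv:1707.03703 — 2 statements merged into one kernel-verified Lean document; each statement's English description precedes it below -/
import Mathlib

section
/- The operator B commutes with ∂_x: B ∘ ∂_x = ∂_x ∘ B as maps from Θ to Â. Moreover, for every χ ∈ Θ one has Δ(B(χ)) = ∂_y(χ), where ∂_y is the derivation of Â with ∂_y(u^{(s,t)}) = u^{(s,t+1)} and ∂_y(θ^{(s,t)}) = θ^{(s,t+1)}. -/
open scoped TensorProduct

/-- The free graded-commutative algebra `Â` on even generators `u^{(s,t)}` and odd
generators `θ^{(s,t)}`, realized as polynomials tensored with an exterior algebra. -/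
noncomputable abbrev AHat : Type :=
  MvPolynomial (ℕ × ℕ) ℝ ⊗[ℝ] ExteriorAlgebra ℝ ((ℕ × ℕ) →₀ ℝ)

/-- The even generator `u^{(s,t)}`. -/
noncomputable def ug (s t : ℕ) : AHat := MvPolynomial.X (s, t) ⊗ₜ[ℝ] 1

/-- The odd generator `θ^{(s,t)}`. -/
noncomputable def θg (s t : ℕ) : AHat :=
  1 ⊗ₜ[ℝ] ExteriorAlgebra.ι ℝ (Finsupp.single (s, t) 1)

/-- `Θ ⊂ Â`: the subalgebra generated by the `θ^{(s,0)}`, `s ≥ 0`. -/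
noncomputable def ThSub : Subalgebra ℝ AHat :=
  Algebra.adjoin ℝ (Set.range fun s => θg s 0)

set_option synthInstance.maxHeartbeats 1000000 in
set_option maxHeartbeats 2000000 in
/-- `B = Σ_{i≥0} u^{(i,0)} ∂/∂θ^{(i,0)}` commutes with `∂_x` on `Θ`, and for
every `χ ∈ Θ` one has `Δ(B(χ)) = ∂_y(χ)`.  Here `Dx = ∂_x`, `Dy = ∂_y` are the derivations
with `∂_x(u^{(s,t)}) = u^{(s+1,t)}`, `∂_x(θ^{(s,t)}) = θ^{(s+1,t)}`, `∂_y(u^{(s,t)}) = u^{(s,t+1)}`,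
`∂_y(θ^{(s,t)}) = θ^{(s,t+1)}`, and `Δ` is the odd derivation with `Δ(u^{(s,t)}) = θ^{(s,t+1)}`,
`Δ(θ^{(s,t)}) = 0`; `B` is characterized on `Θ` by `B(1) = 0` and
`B(θ^{(s,0)} x) = u^{(s,0)} x − θ^{(s,0)} B(x)` for `x ∈ Θ`. -/
theorem stmt13
    (Dx : AHat →ₗ[ℝ] AHat)
    (hDxder : ∀ a b, Dx (a * b) = Dx a * b + a * Dx b)
    (hDxu : ∀ s t, Dx (ug s t) = ug (s + 1) t)
    (hDxθ : ∀ s t, Dx (θg s t) = θg (s + 1) t)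
    (Dy : AHat →ₗ[ℝ] AHat)
    (hDyder : ∀ a b, Dy (a * b) = Dy a * b + a * Dy b)
    (hDyu : ∀ s t, Dy (ug s t) = ug s (t + 1))
    (hDyθ : ∀ s t, Dy (θg s t) = θg s (t + 1))
    (Δ : AHat →ₗ[ℝ] AHat) (hΔ1 : Δ 1 = 0)
    (hΔu : ∀ s t (x : AHat), Δ (ug s t * x) = θg s (t + 1) * x + ug s t * Δ x)
    (hΔθ : ∀ s t (x : AHat), Δ (θg s t * x) = - (θg s t * Δ x))
    (B : AHat →ₗ[ℝ] AHat) (hB1 : B 1 = 0)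
    (hBθ : ∀ s (x : AHat), x ∈ ThSub → B (θg s 0 * x) = ug s 0 * x - θg s 0 * B x) :
    ∀ χ ∈ ThSub, B (Dx χ) = Dx (B χ) ∧ Δ (B χ) = Dy χ := by
  have hDx1 : Dx (1 : AHat) = 0 := by
    have h := hDxder 1 1
    simp only [mul_one, one_mul] at h
    exact (left_eq_add.mp h)
  have hDy1 : Dy (1 : AHat) = 0 := by
    have h := hDyder 1 1
    simp only [mul_one, one_mul] at h
    exact (left_eq_add.mp h)
  -- invariant for monomials
  have key : ∀ l : List AHat, (∀ x ∈ l, x ∈ Set.range fun s => θg s 0) →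
      l.prod ∈ ThSub ∧ Dx l.prod ∈ ThSub ∧ Δ l.prod = 0 ∧
        B (Dx l.prod) = Dx (B l.prod) ∧ Δ (B l.prod) = Dy l.prod := by
    intro l
    induction l with
    | nil =>
      intro _
      simp only [List.prod_nil]
      exact ⟨one_mem _, by rw [hDx1]; exact zero_mem _, hΔ1,
        by rw [hDx1, hB1, map_zero, map_zero],
        by rw [hB1, map_zero, hDy1]⟩
    | cons a l ih =>
      intro hmem
      obtain ⟨s, rfl⟩ := hmem a List.mem_cons_self
      obtain ⟨hρ, hρDx, hρΔ, hρB, hρΔB⟩ := ih (fun x hx => hmem x (List.mem_cons_of_mem _ hx))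
      set ρ := l.prod with hρdef
      have hθmem : ∀ s', θg s' 0 ∈ ThSub := fun s' =>
        Algebra.subset_adjoin (Set.mem_range_self s')
      rw [List.prod_cons]
      have hDxχ : Dx (θg s 0 * ρ) = θg (s + 1) 0 * ρ + θg s 0 * Dx ρ := by
        rw [hDxder, hDxθ]
      refine ⟨mul_mem (hθmem s) hρ, ?_, ?_, ?_, ?_⟩
      · rw [hDxχ]
        exact add_mem (mul_mem (hθmem (s + 1)) hρ) (mul_mem (hθmem s) hρDx)
      · rw [hΔθ, hρΔ, mul_zero, neg_zero]
      · rw [hDxχ, map_add, hBθ (s + 1) ρ hρ, hBθ s (Dx ρ) hρDx,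
          hBθ s ρ hρ, map_sub, hDxder, hDxder, hDxu, hDxθ, hρB]
        abel
      · rw [hBθ s ρ hρ, map_sub, hΔu, hρΔ, mul_zero, add_zero, hΔθ, hρΔB,
          hDyder, hDyθ]
        abel
  -- pass from monomials to the whole subalgebra
  intro χ hχ
  have hχ' : χ ∈ Submodule.span ℝ
      (Submonoid.closure (Set.range fun s => θg s 0) : Set AHat) := by
    rw [← Algebra.adjoin_eq_span]; exact hχ
  clear hχ
  refine Submodule.span_induction ?_ ?_ ?_ ?_ hχ'
  · intro x hx
    obtain ⟨l, hl, rfl⟩ := Submonoid.exists_list_of_mem_closure hx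
    obtain ⟨_, _, _, h1, h2⟩ := key l hl
    exact ⟨h1, h2⟩
  · simp
  · intro x y _ _ hx hy
    constructor
    · rw [map_add, map_add, hx.1, hy.1, map_add, map_add]
    · rw [map_add, map_add, hx.2, hy.2, map_add]
  · intro r x _ hx
    constructor
    · rw [map_smul, map_smul, hx.1, map_smul, map_smul]
    · rw [map_smul, map_smul, hx.2, map_smul]
end

section
/- For every n ≥ 0, the sum over all finitely supported functions m : {1,2,3,…} → ℕ with Σ_j j·m(j) = n of the products ∏_j ( ((−1)^j / j)^{m(j)} / m(j)! ) equals (−1)^n. -/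
noncomputable def pf (j k : ℕ) : ℝ := ((-1:ℝ)^j / (j:ℝ))^k / (k.factorial : ℝ)

noncomputable def S (N B k : ℕ) : ℝ :=
  ∑ m ∈ Finset.univ.filter (fun m : Fin N → Fin (B+1) => ∑ i, (i.1+1) * (m i).1 = k),
    ∏ i, pf (i.1+1) (m i).1

lemma pf_zero (j : ℕ) : pf j 0 = 1 := by simp [pf]

lemma pf_succ (j k : ℕ) (hj : j ≠ 0) :
    ((j : ℝ) * (k+1)) * pf j (k+1) = (-1:ℝ)^j * pf j k := by
  have hj' : (j:ℝ) ≠ 0 := Nat.cast_ne_zero.mpr hj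
  have hk : (k.factorial : ℝ) ≠ 0 := Nat.cast_ne_zero.mpr k.factorial_ne_zero
  simp only [pf, pow_succ, Nat.factorial_succ, Nat.cast_mul, Nat.cast_add, Nat.cast_one]
  field_simp

lemma term_le {N B k : ℕ} (m : Fin N → Fin (B+1))
    (hm : ∑ i, (i.1+1) * (m i).1 = k) (i : Fin N) : (i.1+1) * (m i).1 ≤ k :=
  hm ▸ Finset.single_le_sum (f := fun i => (i.1+1) * (m i).1)
    (fun _ _ => Nat.zero_le _) (Finset.mem_univ i)

lemma val_le {N B k : ℕ} (m : Fin N → Fin (B+1))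
    (hm : ∑ i, (i.1+1) * (m i).1 = k) (i : Fin N) : (m i).1 ≤ k :=
  le_trans (Nat.le_mul_of_pos_left _ (Nat.succ_pos _)) (term_le m hm i)

lemma last_eq_zero {N B k : ℕ} (hk : k ≤ N) (m : Fin (N+1) → Fin (B+1))
    (hm : ∑ i, (i.1+1) * (m i).1 = k) : m (Fin.last N) = 0 := by
  have h := term_le m hm (Fin.last N)
  simp only [Fin.val_last] at h
  have : (m (Fin.last N)).1 = 0 := by
    by_contra hc
    have h1 : 1 ≤ (m (Fin.last N)).1 := Nat.one_le_iff_ne_zero.mpr hc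
    nlinarith
  exact Fin.ext this

lemma S_N_succ (N B k : ℕ) (hk : k ≤ N) : S (N+1) B k = S N B k := by
  unfold S
  refine Finset.sum_nbij' (i := fun m (i : Fin N) => m i.castSucc)
    (j := fun m => Fin.snoc m 0) ?_ ?_ ?_ ?_ ?_
  · intro m hm
    simp only [Finset.mem_filter, Finset.mem_univ, true_and] at hm ⊢
    have h0 := last_eq_zero hk m hm
    rw [Fin.sum_univ_castSucc] at hm
    simpa [h0] using hm
  · intro m hm
    simp only [Finset.mem_filter, Finset.mem_univ, true_and] at hm ⊢
    rw [Fin.sum_univ_castSucc]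
    simpa using hm
  · intro m hm
    simp only [Finset.mem_filter, Finset.mem_univ, true_and] at hm
    have h0 := last_eq_zero hk m hm
    funext i
    induction i using Fin.lastCases with
    | last => simpa using h0.symm
    | cast i => simp
  · intro m hm
    funext i
    simp
  · intro m hm
    simp only [Finset.mem_filter, Finset.mem_univ, true_and] at hm
    have h0 := last_eq_zero hk m hm
    rw [Fin.prod_univ_castSucc]
    simp [h0, pf_zero]

lemma S_N_eq (N B k : ℕ) (hk : k ≤ N) : S N B k = S k B k := by
  induction N with
  | zero => have : k = 0 := by omega
            subst this; rfl
  | succ N ih =>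
      rcases Nat.lt_or_ge k (N+1) with h | h
      · rw [S_N_succ N B k (by omega), ih (by omega)]
      · have : k = N+1 := by omega
        subst this; rfl

lemma S_B_succ (N B k : ℕ) (hk : k ≤ B) : S N (B+1) k = S N B k := by
  unfold S
  refine Finset.sum_nbij'
    (i := fun m (i : Fin N) => (⟨min (m i).1 B, Nat.lt_succ_of_le (min_le_right _ _)⟩ : Fin (B+1)))
    (j := fun m (i : Fin N) => Fin.castLE (by omega) (m i)) ?_ ?_ ?_ ?_ ?_
  · intro m hm
    simp only [Finset.mem_filter, Finset.mem_univ, true_and] at hm ⊢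
    rw [← hm]
    refine Finset.sum_congr rfl fun i _ => ?_
    have := val_le m hm i
    congr 1
    omega
  · intro m hm
    simp only [Finset.mem_filter, Finset.mem_univ, true_and] at hm ⊢
    rw [← hm]
    refine Finset.sum_congr rfl fun i _ => rfl
  · intro m hm
    simp only [Finset.mem_filter, Finset.mem_univ, true_and] at hm
    funext i
    apply Fin.ext
    have := val_le m hm i
    simp [Fin.castLE]
    omega
  · intro m hm
    funext i
    apply Fin.ext
    have : (m i).1 ≤ B := by omega
    simp [Fin.castLE]
    omega
  · intro m hm
    simp only [Finset.mem_filter, Finset.mem_univ, true_and] at hm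
    refine Finset.prod_congr rfl fun i _ => ?_
    have := val_le m hm i
    show pf _ _ = pf _ (min (m i).1 B)
    have hmin : min (m i).1 B = (m i).1 := by omega
    rw [hmin]

lemma S_B_eq (N B k : ℕ) (hk : k ≤ B) : S N B k = S N k k := by
  induction B with
  | zero => have : k = 0 := by omega
            subst this; rfl
  | succ B ih =>
      rcases Nat.lt_or_ge k (B+1) with h | h
      · rw [S_B_succ N B k (by omega), ih (by omega)]
      · have : k = B+1 := by omega
        subst this; rfl

lemma sum_split {n : ℕ} (i : Fin n) (m : Fin n → Fin (n+1)) :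
    ∑ i', (i'.1+1) * (m i').1
      = (i.1+1) * (m i).1 + ∑ i' ∈ Finset.univ.erase i, (i'.1+1) * (m i').1 :=
  (Finset.add_sum_erase _ _ (Finset.mem_univ i)).symm

lemma sum_update {n : ℕ} (i : Fin n) (m : Fin n → Fin (n+1)) (b : Fin (n+1)) :
    ∑ i', (i'.1+1) * ((Function.update m i b) i').1
      = (i.1+1) * b.1 + ∑ i' ∈ Finset.univ.erase i, (i'.1+1) * (m i').1 := by
  rw [sum_split i]
  rw [Function.update_self]
  congr 1
  refine Finset.sum_congr rfl fun j hj => ?_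
  rw [Function.update_of_ne (Finset.ne_of_mem_erase hj)]

lemma prod_split {n : ℕ} (i : Fin n) (m : Fin n → Fin (n+1)) :
    ∏ i', pf (i'.1+1) (m i').1
      = pf (i.1+1) (m i).1 * ∏ i' ∈ Finset.univ.erase i, pf (i'.1+1) (m i').1 :=
  (Finset.mul_prod_erase _ _ (Finset.mem_univ i)).symm

lemma prod_update {n : ℕ} (i : Fin n) (m : Fin n → Fin (n+1)) (b : Fin (n+1)) :
    ∏ i', pf (i'.1+1) ((Function.update m i b) i').1
      = pf (i.1+1) b.1 * ∏ i' ∈ Finset.univ.erase i, pf (i'.1+1) (m i').1 := by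
  rw [prod_split i]
  rw [Function.update_self]
  congr 1
  refine Finset.prod_congr rfl fun j hj => ?_
  rw [Function.update_of_ne (Finset.ne_of_mem_erase hj)]

lemma inner (n : ℕ) (i : Fin n) :
    ∑ m ∈ Finset.univ.filter (fun m : Fin n → Fin (n+1) => ∑ i', (i'.1+1) * (m i').1 = n),
      (((i.1+1) * (m i).1 : ℕ) : ℝ) * ∏ i', pf (i'.1+1) (m i').1
    = (-1:ℝ)^(i.1+1) * S n n (n - (i.1+1)) := by
  classical
  unfold S
  rw [Finset.mul_sum]
  rw [← Finset.sum_filter_add_sum_filter_not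
    (Finset.univ.filter (fun m : Fin n → Fin (n+1) => ∑ i', (i'.1+1) * (m i').1 = n))
    (fun m => (m i).1 = 0)]
  have hz : ∑ m ∈ (Finset.univ.filter
        (fun m : Fin n → Fin (n+1) => ∑ i', (i'.1+1) * (m i').1 = n)).filter
        (fun m => (m i).1 = 0),
      (((i.1+1) * (m i).1 : ℕ) : ℝ) * ∏ i', pf (i'.1+1) (m i').1 = 0 := by
    refine Finset.sum_eq_zero fun m hm => ?_
    simp only [Finset.mem_filter] at hm
    rw [hm.2]
    simp
  rw [hz, zero_add]
  rw [Finset.filter_filter]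
  refine Finset.sum_nbij'
    (i := fun m => Function.update m i (⟨(m i).1 - 1, by omega⟩ : Fin (n+1)))
    (j := fun m => Function.update m i
      (⟨min ((m i).1 + 1) n, Nat.lt_succ_of_le (min_le_right _ _)⟩ : Fin (n+1)))
    ?_ ?_ ?_ ?_ ?_
  · intro m hm
    simp only [Finset.mem_filter, Finset.mem_univ, true_and] at hm ⊢
    obtain ⟨hm, hne⟩ := hm
    rw [sum_update]
    dsimp only
    rw [sum_split i] at hm
    obtain ⟨c, hc⟩ : ∃ c, (m i).1 = c + 1 := ⟨(m i).1 - 1, by omega⟩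
    rw [hc] at hm ⊢
    rw [Nat.mul_succ] at hm
    simp only [Nat.add_sub_cancel]
    set A := (i.1+1) * c with hA
    omega
  · intro m hm
    simp only [Finset.mem_filter, Finset.mem_univ, true_and] at hm ⊢
    have hin : i.1 + 1 ≤ n := i.isLt
    have hv := val_le m hm i
    have hmin : min ((m i).1 + 1) n = (m i).1 + 1 := by omega
    constructor
    · rw [sum_update]
      dsimp only
      rw [hmin]
      rw [sum_split i] at hm
      rw [Nat.mul_succ]
      set A := (i.1+1) * (m i).1 with hA
      omega
    · rw [Function.update_self]
      dsimp only
      omega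
  · intro m hm
    simp only [Finset.mem_filter, Finset.mem_univ, true_and] at hm
    obtain ⟨hm, hne⟩ := hm
    have hle : (m i).1 ≤ n := by omega
    funext i'
    rcases eq_or_ne i' i with rfl | hne'
    · apply Fin.ext
      simp only [Function.update_self]
      omega
    · simp only [Function.update_of_ne hne']
  · intro m hm
    simp only [Finset.mem_filter, Finset.mem_univ, true_and] at hm
    have hin : i.1 + 1 ≤ n := i.isLt
    have hv := val_le m hm i
    funext i'
    rcases eq_or_ne i' i with rfl | hne'
    · apply Fin.ext
      simp only [Function.update_self]
      omega
    · simp only [Function.update_of_ne hne']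
  · intro m hm
    simp only [Finset.mem_filter, Finset.mem_univ, true_and] at hm
    obtain ⟨hm, hne⟩ := hm
    rw [prod_update, prod_split i]
    obtain ⟨c, hc⟩ : ∃ c, (m i).1 = c + 1 := ⟨(m i).1 - 1, by omega⟩
    simp only [hc, Nat.add_sub_cancel]
    have key := pf_succ (i.1+1) c (Nat.succ_ne_zero _)
    push_cast at key ⊢
    linear_combination (∏ i' ∈ Finset.univ.erase i, pf (i'.1+1) (m i').1) * key

lemma S_recurrence (n : ℕ) :
    (n : ℝ) * S n n n = ∑ i : Fin n, (-1:ℝ)^(i.1+1) * S n n (n - (i.1+1)) := by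
  classical
  have lhs_eq : (n : ℝ) * S n n n
      = ∑ i : Fin n, ∑ m ∈ Finset.univ.filter
          (fun m : Fin n → Fin (n+1) => ∑ i', (i'.1+1) * (m i').1 = n),
          (((i.1+1) * (m i).1 : ℕ) : ℝ) * ∏ i', pf (i'.1+1) (m i').1 := by
    unfold S
    rw [Finset.mul_sum, Finset.sum_comm]
    refine Finset.sum_congr rfl fun m hm => ?_
    simp only [Finset.mem_filter, Finset.mem_univ, true_and] at hm
    rw [← Finset.sum_mul]
    congr 1
    conv_lhs => rw [← hm]
    push_cast
    rfl
  rw [lhs_eq]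
  exact Finset.sum_congr rfl fun i _ => inner n i

lemma S_diag : ∀ n : ℕ, S n n n = (-1:ℝ)^n := by
  intro n
  induction n using Nat.strong_induction_on with
  | _ n ih =>
    rcases Nat.eq_zero_or_pos n with rfl | hn
    · simp [S]
    · have key := S_recurrence n
      have hterm : ∀ i : Fin n, (-1:ℝ)^(i.1+1) * S n n (n - (i.1+1)) = (-1:ℝ)^n := by
        intro i
        have h1 : i.1 + 1 ≤ n := i.isLt
        have h2 : n - (i.1+1) < n := by omega
        rw [S_N_eq n n (n - (i.1+1)) (by omega), S_B_eq (n - (i.1+1)) n (n - (i.1+1)) (by omega),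
          ih _ h2, ← pow_add]
        congr 1
        omega
      rw [Finset.sum_congr rfl (fun i _ => hterm i), Finset.sum_const, Finset.card_univ,
        Fintype.card_fin, nsmul_eq_mul] at key
      have hn' : (n:ℝ) ≠ 0 := Nat.cast_ne_zero.mpr (by omega)
      field_simp at key
      linarith

/-- for every `n ≥ 0`, the sum over all finitely supported multiplicity
functions `m` on the positive integers with `Σ_j j·m(j) = n` of
`∏_j ((−1)^j / j)^{m(j)} / m(j)!` equals `(−1)^n`.  Such an `m` necessarily satisfies
`m(j) = 0` for `j > n` and `m(j) ≤ n`, so it is encoded as a function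
`m : Fin n → Fin (n+1)`, where `m i` is the multiplicity of `j = i + 1`. -/
theorem stmt16 (n : ℕ) :
    ∑ m ∈ Finset.univ.filter
        (fun m : Fin n → Fin (n + 1) => ∑ i, (i.1 + 1) * (m i).1 = n),
      ∏ i : Fin n,
        ((-1 : ℝ) ^ (i.1 + 1) / (i.1 + 1)) ^ ((m i).1) / ((m i).1.factorial : ℝ)
      = (-1 : ℝ) ^ n := by
  have h := S_diag n
  unfold S pf at h
  rw [← h]
  refine Finset.sum_congr rfl fun m _ => Finset.prod_congr rfl fun i _ => ?_
  norm_num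
end
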